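/- arXiv:2306.13788 — 2 statements merged into one kernel-verified Lean document; each statement's English description precedes it below -/
import Mathlib

section
/- Let a, b > 0 and let f satisfy hypothesis (H), be of type A, and be differentiable from the right at 0 with derivative f'(0). Then every admissible speed c (for f, a, b) satisfies c ≥ 2·√(f'(0)/a). -/
open Real Set Filter Topology

/-- `Ffn f v = ∫₀^v f(s) ds`. -/
noncomputable def Ffn (f : ℝ → ℝ) (v : ℝ) : ℝ := ∫ s in (0:ℝ)..v, f s

/-- Hypothesis (H): `f` continuous on `[0,1]`, vanishing at the endpoints,
with linear controls at `0` and `1`. -/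
def HypH (f : ℝ → ℝ) : Prop :=
  ContinuousOn f (Set.Icc 0 1) ∧ f 0 = 0 ∧ f 1 = 0 ∧
    ∃ k > (0:ℝ), ∀ s ∈ Set.Icc (0:ℝ) 1, |f s| ≤ k * s ∧ |f s| ≤ k * (1 - s)

/-- Type A (monostable): `f > 0` on `(0,1)`. -/
def TypeA (f : ℝ → ℝ) : Prop := ∀ s ∈ Set.Ioo (0:ℝ) 1, 0 < f s

/-- Type B (combustion) with switching point `α`. -/
def TypeB (f : ℝ → ℝ) (α : ℝ) : Prop :=
  α ∈ Set.Ioo (0:ℝ) 1 ∧ (∀ s ∈ Set.Icc (0:ℝ) α, f s = 0) ∧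
    ∀ s ∈ Set.Ioo α 1, 0 < f s

/-- Type C (bistable) with switching point `α` and `∫₀¹ f ≥ 0`. -/
def TypeC (f : ℝ → ℝ) (α : ℝ) : Prop :=
  α ∈ Set.Ioo (0:ℝ) 1 ∧ (∀ s ∈ Set.Ioo (0:ℝ) α, f s < 0) ∧
    (∀ s ∈ Set.Ioo α 1, 0 < f s) ∧ 0 ≤ Ffn f 1

/-- `R_{a,b}(s) = √(s(2a + b²s))/(a + b²s)`. -/
noncomputable def Rab (a b s : ℝ) : ℝ :=
  Real.sqrt (s * (2 * a + b ^ 2 * s)) / (a + b ^ 2 * s)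

/-- `c` is an admissible speed for `(f, a, b)`: the first-order reduction
`y' = c·a·R_{a,b}(y) − f(v)` has a solution on `[0,1]` with `y(0) = y(1) = 0`
and `y > 0` on `(0,1)`. -/
def Admissible (f : ℝ → ℝ) (a b c : ℝ) : Prop :=
  ∃ y : ℝ → ℝ, y 0 = 0 ∧ y 1 = 0 ∧ (∀ v ∈ Set.Ioo (0:ℝ) 1, 0 < y v) ∧
    ∀ v ∈ Set.Icc (0:ℝ) 1,
      HasDerivWithinAt y (c * a * Rab a b (y v) - f v) (Set.Icc 0 1) v

/-- A (monotone) front profile propagating with speed `c` for parameters `a, b`: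
a strictly increasing `C²` solution of `(v'/√(a² − b²(v')²))' − c v' + f(v) = 0`
with `|v'| < a/b`, connecting `0` (at `−∞`) and `1` (at `+∞`). -/
def FrontProfile (f : ℝ → ℝ) (a b c : ℝ) (v : ℝ → ℝ) : Prop :=
  StrictMono v ∧ ContDiff ℝ 2 v ∧ (∀ z, |deriv v z| < a / b) ∧
    (∀ z, deriv (fun t => deriv v t / Real.sqrt (a ^ 2 - b ^ 2 * (deriv v t) ^ 2)) z
        - c * deriv v z + f (v z) = 0) ∧
    Filter.Tendsto v Filter.atBot (nhds 0) ∧ Filter.Tendsto v Filter.atTop (nhds 1)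

/-!
With `K = c √(2a)`, the bound `a R_{a,b}(s) ≤ √(2as)` and `f > 0` give `y' ≤ K √y` on `(0, 1)`,
hence `√y(v) ≤ K v / 2`; near `0` also `y' ≤ K √y − m v` for every `m < f'(0)`. If `8m > K²`,
write `m = K²/8 + η`; then `y/v² + η log v` is nonincreasing on some `(0, q]`, its derivative
being at most `−2(√y − Kv/4)²/v³`. Comparing its values at `q` and at a tiny `p`, where it is at
most `K²/4 + η log p`, forces `y(q) < 0`. Hence `8 f'(0) ≤ K² = 2ac²`.
-/

lemma Rab_nonneg {a s : ℝ} (b : ℝ) (ha : 0 < a) (hs : 0 ≤ s) : 0 ≤ Rab a b s :=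
  div_nonneg (sqrt_nonneg _) (by positivity)

lemma mul_Rab_le_sqrt {a s : ℝ} (b : ℝ) (ha : 0 < a) (hs : 0 ≤ s) :
    a * Rab a b s ≤ √(2 * a * s) := by
  rw [le_sqrt (mul_nonneg ha.le (Rab_nonneg b ha hs)) (by positivity), Rab, mul_pow, div_pow,
    sq_sqrt (by positivity), mul_div_assoc', div_le_iff₀ (by positivity)]
  have : 0 ≤ 3 * a ^ 2 * b ^ 2 * s ^ 2 + 2 * a * b ^ 4 * s ^ 3 := by positivity
  nlinarith

lemma Admissible.speed_nonneg {f : ℝ → ℝ} {a b c : ℝ} (ha : 0 < a) (hA : TypeA f)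
    (hc : Admissible f a b c) : 0 ≤ c := by
  obtain ⟨y, hy0, -, hypos, hyd⟩ := hc
  by_contra! hc0
  have hanti : AntitoneOn y (Icc 0 1) := by
    refine antitoneOn_of_hasDerivWithinAt_nonpos (convex_Icc 0 1)
      (fun v hv => (hyd v hv).continuousWithinAt)
      (fun v hv => (hyd v (interior_subset hv)).mono interior_subset) fun v hv => ?_
    rw [interior_Icc] at hv
    have := mul_nonpos_of_nonpos_of_nonneg (mul_nonpos_of_nonpos_of_nonneg hc0.le ha.le)
      (Rab_nonneg b ha (hypos v hv).le)
    linarith [hA v hv]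
  have hhalf : (1 / 2 : ℝ) ∈ Ioo 0 1 := by norm_num
  have := hanti (left_mem_Icc.2 zero_le_one) (Ioo_subset_Icc_self hhalf) (by norm_num)
  linarith [hypos _ hhalf]

lemma eventually_mul_sub_lt_of_hasDerivWithinAt_Ici {f : ℝ → ℝ} {x d m : ℝ}
    (hd : HasDerivWithinAt f d (Ici x) x) (hm : m < d) :
    ∀ᶠ v in 𝓝[>] x, m * (v - x) < f v - f x := by
  have hslope := (hasDerivWithinAt_iff_tendsto_slope' (lt_irrefl x)).1
    (hasDerivWithinAt_Ioi_iff_Ici.2 hd)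
  filter_upwards [hslope.eventually (eventually_gt_nhds hm), self_mem_nhdsWithin] with v hv hxv
  rwa [slope_def_field, lt_div_iff₀ (sub_pos.2 hxv)] at hv

section Comparison

variable {y y' : ℝ → ℝ} {K : ℝ}

lemma sqrt_le_mul_of_hasDerivAt_le_mul_sqrt (hyc : ContinuousOn y (Ico 0 1)) (hy0 : y 0 = 0)
    (hypos : ∀ v ∈ Ioo 0 1, 0 < y v) (hy' : ∀ v ∈ Ioo 0 1, HasDerivAt y (y' v) v)
    (hle : ∀ v ∈ Ioo 0 1, y' v ≤ K * √(y v)) {v : ℝ} (hv : v ∈ Ico 0 1) :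
    √(y v) ≤ K / 2 * v := by
  have hanti : AntitoneOn (fun v => √(y v) - K / 2 * v) (Ico 0 1) := by
    refine antitoneOn_of_hasDerivWithinAt_nonpos (f' := fun v => y' v / (2 * √(y v)) - K / 2)
      (convex_Ico 0 1) (by fun_prop) (fun v hv => ?_) fun v hv => ?_
    all_goals rw [interior_Ico] at hv
    · exact (((hy' v hv).sqrt (hypos v hv).ne').sub
        (((hasDerivAt_id' v).const_mul (K / 2)).congr_deriv (mul_one _))).hasDerivWithinAt
    · have hsqrt := sqrt_pos.2 (hypos v hv)
      rw [sub_nonpos, div_le_iff₀ (by positivity)]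
      linarith [hle v hv]
  simpa [hy0] using hanti (left_mem_Ico.2 one_pos) hv hv.1

lemma antitoneOn_div_sq_add_mul_log {η p q : ℝ} (hp : 0 < p)
    (hynonneg : ∀ v ∈ Ioo p q, 0 ≤ y v) (hy' : ∀ v ∈ Icc p q, HasDerivAt y (y' v) v)
    (hle : ∀ v ∈ Ioo p q, y' v ≤ K * √(y v) - (K ^ 2 / 8 + η) * v) :
    AntitoneOn (fun v => y v / v ^ 2 + η * log v) (Icc p q) := by
  have hG' : ∀ v ∈ Icc p q, HasDerivAt (fun v => y v / v ^ 2 + η * log v)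
      ((y' v * v - 2 * y v) / v ^ 3 + η / v) v := fun v hv => by
    have hv0 : 0 < v := hp.trans_le hv.1
    refine (((hy' v hv).div (hasDerivAt_pow 2 v) (by positivity)).add
      ((hasDerivAt_log hv0.ne').const_mul η)).congr_deriv ?_
    field_simp
    ring
  refine antitoneOn_of_hasDerivWithinAt_nonpos (convex_Icc p q)
    (fun v hv => (hG' v hv).continuousAt.continuousWithinAt)
    (fun v hv => (hG' v (interior_subset hv)).hasDerivWithinAt) fun v hv => ?_
  rw [interior_Icc] at hv
  have hv0 : 0 < v := hp.trans hv.1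
  -- with `r = √y`, the bound on `y'` makes the numerator at most `-2 (r - K v / 4)²`
  have hr := sq_sqrt (hynonneg v hv)
  have key : y' v * v - 2 * y v + η * v ^ 2 ≤ 0 := by
    nlinarith [hle v hv, sq_nonneg (√(y v) - K * v / 4)]
  calc (y' v * v - 2 * y v) / v ^ 3 + η / v = (y' v * v - 2 * y v + η * v ^ 2) / v ^ 3 := by
        field_simp
    _ ≤ 0 := div_nonpos_of_nonpos_of_nonneg key (by positivity)

theorem le_sq_div_eight_of_hasDerivAt_le {m : ℝ} (hyc : ContinuousOn y (Ico 0 1))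
    (hy0 : y 0 = 0)
    (hypos : ∀ v ∈ Ioo 0 1, 0 < y v) (hy' : ∀ v ∈ Ioo 0 1, HasDerivAt y (y' v) v)
    (hle : ∀ v ∈ Ioo 0 1, y' v ≤ K * √(y v))
    (hm : ∀ᶠ v in 𝓝[>] 0, y' v ≤ K * √(y v) - m * v) : m ≤ K ^ 2 / 8 := by
  by_contra! hK
  obtain ⟨η, hη, rfl⟩ : ∃ η > 0, m = K ^ 2 / 8 + η := ⟨m - K ^ 2 / 8, by linarith, by ring⟩
  obtain ⟨q, hq, hqm⟩ := mem_nhdsGT_iff_exists_Ioc_subset.1 (hm.and (Ioo_mem_nhdsGT one_pos))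
  have hq1 : q ∈ Ioo 0 1 := (hqm (right_mem_Ioc.2 hq)).2
  have hmem : ∀ v, 0 < v → v ≤ q → v ∈ Ioo 0 1 := fun v hv0 hvq => (hqm ⟨hv0, hvq⟩).2
  set p := q * exp (-(K ^ 2 / (4 * η) + 1))
  have hp0 : 0 < p := mul_pos hq1.1 (exp_pos _)
  have hpq : p < q := mul_lt_of_lt_one_right hq1.1 (exp_lt_one_iff.2 (by
    have : 0 ≤ K ^ 2 / (4 * η) := by positivity
    linarith))
  have hG := antitoneOn_div_sq_add_mul_log (y := y) (K := K) hp0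
    (fun v hv => (hypos v (hmem v (hp0.trans hv.1) hv.2.le)).le)
    (fun v hv => hy' v (hmem v (hp0.trans_le hv.1) hv.2))
    (fun v hv => (hqm ⟨hp0.trans hv.1, hv.2.le⟩).1)
    (left_mem_Icc.2 hpq.le) (right_mem_Icc.2 hpq.le) hpq.le
  have hyp : y p / p ^ 2 ≤ K ^ 2 / 4 := by
    have hsqrt := sqrt_le_mul_of_hasDerivAt_le_mul_sqrt hyc hy0 hypos hy' hle
      (Ioo_subset_Ico_self (hmem p hp0 hpq.le))
    rw [div_le_iff₀ (pow_pos hp0 2), ← sq_sqrt (hypos p (hmem p hp0 hpq.le)).le]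
    nlinarith [sqrt_nonneg (y p)]
  have hlog : η * log p = η * log q - K ^ 2 / 4 - η := by
    rw [log_mul hq1.1.ne' (exp_ne_zero _), log_exp]
    field_simp
    ring
  have hyq : 0 < y q / q ^ 2 := div_pos (hypos q hq1) (pow_pos hq1.1 2)
  simp only at hG
  linarith

end Comparison

theorem statement6_general (f : ℝ → ℝ) (a b d : ℝ) (ha : 0 < a)
    (hH : HypH f) (hA : TypeA f)
    (hd : HasDerivWithinAt f d (Set.Ici 0) 0)
    (c : ℝ) (hc : Admissible f a b c) :
    2 * Real.sqrt (d / a) ≤ c := by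
  obtain ⟨-, hf0, -⟩ := hH
  have hc0 : 0 ≤ c := hc.speed_nonneg ha hA
  obtain ⟨y, hy0, -, hypos, hyd⟩ := hc
  have hy' : ∀ v ∈ Ioo 0 1, HasDerivAt y (c * a * Rab a b (y v) - f v) v := fun v hv =>
    (hyd v (Ioo_subset_Icc_self hv)).hasDerivAt (Icc_mem_nhds hv.1 hv.2)
  have hyc : ContinuousOn y (Ico 0 1) := fun v hv =>
    (hyd v (Ico_subset_Icc_self hv)).continuousWithinAt.mono Ico_subset_Icc_self
  have hR : ∀ v ∈ Ioo 0 1, c * a * Rab a b (y v) ≤ c * √(2 * a) * √(y v) := fun v hv => by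
    rw [mul_assoc c, mul_assoc c, ← sqrt_mul (by positivity)]
    exact mul_le_mul_of_nonneg_left (mul_Rab_le_sqrt b ha (hypos v hv).le) hc0
  have hda : d ≤ a * c ^ 2 / 4 := le_of_forall_lt_imp_le_of_dense fun m hm => by
    have hfm := eventually_mul_sub_lt_of_hasDerivWithinAt_Ici hd hm
    simp only [hf0, sub_zero] at hfm
    have := le_sq_div_eight_of_hasDerivAt_le (K := c * √(2 * a)) (m := m) hyc hy0 hypos hy'
      (fun v hv => by linarith [hR v hv, hA v hv])
      (by filter_upwards [hfm, Ioo_mem_nhdsGT one_pos] with v hfv hv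
          linarith [hR v hv])
    rw [mul_pow, sq_sqrt (by positivity)] at this
    linarith
  rw [← le_div_iff₀' two_pos, sqrt_le_left (by positivity), div_le_iff₀ ha]
  linarith

/-- if `f` is of type A, satisfies (H), and has right derivative
`f'(0)` at `0`, then every admissible speed satisfies `c ≥ 2√(f'(0)/a)`. -/
theorem statement6 (f : ℝ → ℝ) (a b d : ℝ) (ha : 0 < a) (hb : 0 < b)
    (hH : HypH f) (hA : TypeA f)
    (hd : HasDerivWithinAt f d (Set.Ici 0) 0)
    (c : ℝ) (hc : Admissible f a b c) :
    2 * Real.sqrt (d / a) ≤ c :=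
  statement6_general f a b d ha hH hA hd c hc
end

section
/- Let f satisfy hypothesis (H) and be of type C with switching point α and F(1) = 0 (balanced reaction). Then for every ε > 0 and parameters a = b = 1/ε: c = 0 is the unique admissible speed; the corresponding solution of the first-order reduction is y_ε(v) = −F(v); and the steady profiles v_ε, i.e., the increasing solutions of v'(z) = √(y_ε(v)·(2ε + y_ε(v)))/(ε + y_ε(v)) with v_ε(0) = α, converge pointwise on ℝ, as ε → 0⁺, to the piecewise linear function v̄(z) = min(max(z + α, 0), 1). -/
/-!
Put `y = -F`, which is positive on `(0, 1)` and vanishes at both ends. For an admissible speed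
`c`, `y + F` vanishes at `0` and `1`, so by Rolle `c a R(y(ξ)) = 0` somewhere inside, forcing
`c = 0`; conversely `-F` itself solves the reduction with `c = 0`.

A steady profile satisfies `v' = S_ε(y(v))` with `S_ε(y) = √(y(2ε + y))/(ε + y) ∈ [0, 1]`.
Since `y` vanishes quadratically at `1` (hypothesis (H)), `S_ε(y(v)) ≤ K (1 - v)`, and a
Grönwall argument keeps `v` below `1`; with `v' ≤ 1` this gives `v(z) ≤ min (z + α) 1` for
`z ≥ 0`. Conversely, wherever `y(v) ≥ m > 0` the slope is at least `1 - ε/m`, so `v` climbs at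
speed close to `1` until it gets near `1`. The case `z ≤ 0` is the same argument after the
reflection `v ↦ 1 - v(-·)`, which swaps the roles of `0` and `1`.
-/

open Real Set Filter Topology

-- `steadySlope ε y = a * Rab a a y` for `a = 1 / ε`
noncomputable def steadySlope (ε y : ℝ) : ℝ := √(y * (2 * ε + y)) / (ε + y)

section steadySlope

variable {ε y : ℝ}

lemma steadySlope_nonneg (hε : 0 < ε) (hy : 0 ≤ y) : 0 ≤ steadySlope ε y := by
  unfold steadySlope; positivity

lemma steadySlope_le_one (hε : 0 < ε) (hy : 0 ≤ y) : steadySlope ε y ≤ 1 := by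
  rw [steadySlope, div_le_one (by positivity), Real.sqrt_le_left (by positivity)]
  nlinarith

lemma steadySlope_sq (hε : 0 < ε) (hy : 0 ≤ y) :
    steadySlope ε y ^ 2 = 1 - (ε / (ε + y)) ^ 2 := by
  rw [steadySlope, div_pow, Real.sq_sqrt (by positivity)]
  field_simp
  ring

lemma one_sub_div_le_steadySlope {m : ℝ} (hε : 0 < ε) (hm : 0 < m) (hmy : m ≤ y) :
    1 - ε / m ≤ steadySlope ε y := by
  have hy : 0 ≤ y := hm.le.trans hmy
  have hs0 := steadySlope_nonneg hε hy
  have hs1 := steadySlope_le_one hε hy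
  have hr0 : 0 ≤ ε / (ε + y) := by positivity
  have hr1 : ε / (ε + y) ≤ 1 := div_le_one_of_le₀ (by linarith) (by positivity)
  have hrm : ε / (ε + y) ≤ ε / m := div_le_div_of_nonneg_left hε.le hm (by linarith)
  nlinarith [steadySlope_sq hε hy, mul_nonneg hs0 (sub_nonneg.2 hs1),
    mul_nonneg hr0 (sub_nonneg.2 hr1)]

lemma steadySlope_le_mul {k d : ℝ} (hε : 0 < ε) (hy : 0 ≤ y) (hk : 0 ≤ k)
    (hyd : y ≤ k * d ^ 2 / 2) (hd : 0 ≤ d) (hd1 : d ≤ 1) :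
    steadySlope ε y ≤ (√(ε * k) + k / 2) / ε * d := by
  have hroot : √(2 * ε * y) ≤ √(ε * k) * d := by
    rw [Real.sqrt_le_left (by positivity), mul_pow, Real.sq_sqrt (by positivity)]
    nlinarith
  have hnum : √(y * (2 * ε + y)) ≤ √(2 * ε * y) + y := by
    rw [Real.sqrt_le_left (by positivity)]
    nlinarith [Real.sq_sqrt (show 0 ≤ 2 * ε * y by positivity), Real.sqrt_nonneg (2 * ε * y)]
  calc steadySlope ε y ≤ √(y * (2 * ε + y)) / ε :=
        div_le_div_of_nonneg_left (Real.sqrt_nonneg _) hε (by linarith)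
    _ ≤ (√(ε * k) * d + k / 2 * d) / ε := by
        gcongr
        nlinarith [mul_le_mul_of_nonneg_left hd1 (mul_nonneg hk hd)]
    _ = (√(ε * k) + k / 2) / ε * d := by ring

end steadySlope

theorem lt_of_hasDerivAt_le_mul_sub {v v' : ℝ → ℝ} {b K : ℝ}
    (hv : ∀ z, HasDerivAt v (v' z) z) (hmono : StrictMono v) (h0 : v 0 < b)
    (hbound : ∀ z, v 0 < v z → v z < b → v' z ≤ K * (b - v z)) (z : ℝ) : v z < b := by
  by_contra! hz
  have hvc : Continuous v := continuous_iff_continuousAt.2 fun t => (hv t).continuousAt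
  obtain ⟨z₀, hz₀, hvz₀⟩ :=
    intermediate_value_Icc (hmono.lt_iff_lt.1 (h0.trans_le hz)).le hvc.continuousOn ⟨h0.le, hz⟩
  -- `(b - v) e^{K t}` is nondecreasing up to the time `v` reaches `b`, yet drops from a
  -- positive value to `0`
  set g := fun t => (b - v t) * exp (K * t)
  have hg : ∀ t, HasDerivAt g ((K * (b - v t) - v' t) * exp (K * t)) t := fun t => by
    have hK : HasDerivAt (fun s => K * s) K t := by simpa using (hasDerivAt_id t).const_mul K
    exact (((hv t).const_sub b).mul hK.exp).congr_deriv (by ring)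
  have hmon : MonotoneOn g (Icc 0 z₀) := by
    refine monotoneOn_of_hasDerivWithinAt_nonneg (convex_Icc 0 z₀)
      (fun t _ => (hg t).continuousAt.continuousWithinAt) (fun t _ => (hg t).hasDerivWithinAt)
      fun t ht => ?_
    rw [interior_Icc] at ht
    have := hbound t (hmono ht.1) (hvz₀ ▸ hmono ht.2)
    exact mul_nonneg (by linarith) (exp_pos _).le
  have := hmon ⟨le_rfl, hz₀.1⟩ ⟨hz₀.1, le_rfl⟩ hz₀.1
  simp only [g, hvz₀, sub_self, zero_mul, mul_zero, exp_zero, mul_one] at this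
  linarith

def IsSteadyProfile (Y : ℝ → ℝ) (ε α : ℝ) (v : ℝ → ℝ) : Prop :=
  StrictMono v ∧ v 0 = α ∧ ∀ z, HasDerivAt v (steadySlope ε (Y (v z))) z

section IsSteadyProfile

variable {Y : ℝ → ℝ} {ε α k : ℝ} {v : ℝ → ℝ}

lemma IsSteadyProfile.reflect (hv : IsSteadyProfile Y ε α v) :
    IsSteadyProfile (fun u => Y (1 - u)) ε (1 - α) (fun z => 1 - v (-z)) := by
  obtain ⟨hmono, h0, hder⟩ := hv
  refine ⟨fun a b hab => sub_lt_sub_left (hmono (neg_lt_neg hab)) 1, by simp [h0], fun z => ?_⟩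
  simpa using ((hder (-z)).comp z (hasDerivAt_neg z)).const_sub 1

lemma IsSteadyProfile.lt_one (hv : IsSteadyProfile Y ε α v) (hε : 0 < ε) (hα : α ∈ Ioo 0 1)
    (hYpos : ∀ u ∈ Ioo 0 1, 0 < Y u) (hYle : ∀ u ∈ Ioo 0 1, Y u ≤ k * (1 - u) ^ 2 / 2)
    (z : ℝ) : v z < 1 := by
  obtain ⟨hmono, h0, hder⟩ := hv
  have hk : 0 ≤ k := by
    have hhalf : (1 / 2 : ℝ) ∈ Ioo 0 1 := ⟨by norm_num, by norm_num⟩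
    nlinarith [hYpos _ hhalf, hYle _ hhalf]
  refine lt_of_hasDerivAt_le_mul_sub (K := (√(ε * k) + k / 2) / ε) hder hmono (h0 ▸ hα.2)
    (fun t ht0 ht1 => ?_) z
  have ht : v t ∈ Ioo 0 1 := ⟨hα.1.trans (h0 ▸ ht0), ht1⟩
  exact steadySlope_le_mul hε (hYpos _ ht).le hk (hYle _ ht) (by linarith) (by linarith [ht.1])

lemma IsSteadyProfile.apply_le_min (hv : IsSteadyProfile Y ε α v) (hε : 0 < ε)
    (hα : α ∈ Ioo 0 1) (hYpos : ∀ u ∈ Ioo 0 1, 0 < Y u)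
    (hYle : ∀ u ∈ Ioo 0 1, Y u ≤ k * (1 - u) ^ 2 / 2)
    {z : ℝ} (hz : 0 ≤ z) : v z ≤ min (z + α) 1 := by
  have hlt := hv.lt_one hε hα hYpos hYle
  obtain ⟨hmono, h0, hder⟩ := hv
  refine le_min ?_ (hlt z).le
  have := (convex_Icc 0 z).image_sub_le_mul_sub_of_deriv_le
    (fun t _ => (hder t).continuousAt.continuousWithinAt)
    (fun t _ => (hder t).differentiableAt.differentiableWithinAt) (C := 1) (fun t ht => ?_)
    0 ⟨le_rfl, hz⟩ z ⟨hz, le_rfl⟩ hz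
  · linarith
  rw [interior_Icc] at ht
  rw [(hder t).deriv]
  exact steadySlope_le_one hε (hYpos _ ⟨hα.1.trans (h0 ▸ hmono ht.1), hlt t⟩).le

lemma eventually_lt_of_isSteadyProfile {v : ℝ → ℝ → ℝ}
    (hv : ∀ ε, 0 < ε → IsSteadyProfile Y ε α (v ε)) (hα : α ∈ Ioo 0 1)
    (hYc : ContinuousOn Y (Ioo 0 1)) (hYpos : ∀ u ∈ Ioo 0 1, 0 < Y u)
    {z a : ℝ} (hz : 0 ≤ z) (ha : a < min (z + α) 1) :
    ∀ᶠ ε in 𝓝[>] 0, a < v ε z := by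
  have haz : a < z + α := ha.trans_le (min_le_left _ _)
  have hq : max a α < 1 := max_lt (ha.trans_le (min_le_right _ _)) hα.2
  have hsub : Icc α (max a α) ⊆ Ioo 0 1 :=
    fun u hu => ⟨hα.1.trans_le hu.1, hu.2.trans_lt hq⟩
  obtain ⟨u₀, hu₀, hmin⟩ := isCompact_Icc.exists_isMinOn
    (nonempty_Icc.2 (le_max_right a α)) (hYc.mono hsub)
  have hm : 0 < Y u₀ := hYpos u₀ (hsub hu₀)
  have hsmall : Tendsto (fun ε => ε / Y u₀ * z) (𝓝[>] 0) (𝓝 0) := by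
    refine tendsto_nhdsWithin_of_tendsto_nhds ?_
    exact (by fun_prop : Continuous fun ε : ℝ => ε / Y u₀ * z).tendsto' 0 0 (by simp)
  filter_upwards [self_mem_nhdsWithin, hsmall.eventually (gt_mem_nhds (sub_pos.2 haz))]
    with ε hε hεz
  obtain ⟨hmono, h0, hder⟩ := hv ε hε
  by_contra! hle
  -- while `v ε` stays in `[α, max a α]`, its slope is at least `1 - ε / min Y`
  have := (convex_Icc 0 z).mul_sub_le_image_sub_of_le_deriv
    (fun t _ => (hder t).continuousAt.continuousWithinAt)
    (fun t _ => (hder t).differentiableAt.differentiableWithinAt) (C := 1 - ε / Y u₀)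
    (fun t ht => ?_) 0 ⟨le_rfl, hz⟩ z ⟨hz, le_rfl⟩ hz
  · rw [h0] at this
    nlinarith
  rw [interior_Icc] at ht
  rw [(hder t).deriv]
  exact one_sub_div_le_steadySlope hε hm <| isMinOn_iff.1 hmin _
    ⟨h0 ▸ hmono.monotone ht.1.le,
      (hmono.monotone ht.2.le).trans (hle.trans (le_max_left a α))⟩

end IsSteadyProfile

section tendsto

variable {Y : ℝ → ℝ} {α k : ℝ} {v : ℝ → ℝ → ℝ}

theorem tendsto_isSteadyProfile_of_nonneg (hv : ∀ ε, 0 < ε → IsSteadyProfile Y ε α (v ε))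
    (hα : α ∈ Ioo 0 1) (hYc : ContinuousOn Y (Ioo 0 1)) (hYpos : ∀ u ∈ Ioo 0 1, 0 < Y u)
    (hYle : ∀ u ∈ Ioo 0 1, Y u ≤ k * (1 - u) ^ 2 / 2) {z : ℝ} (hz : 0 ≤ z) :
    Tendsto (fun ε => v ε z) (𝓝[>] 0) (𝓝 (min (z + α) 1)) :=
  tendsto_order.2 ⟨fun _ ha => eventually_lt_of_isSteadyProfile hv hα hYc hYpos hz ha,
    fun _ hb => eventually_mem_nhdsWithin.mono fun ε hε =>
      ((hv ε hε).apply_le_min hε hα hYpos hYle hz).trans_lt hb⟩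

theorem tendsto_isSteadyProfile (hv : ∀ ε, 0 < ε → IsSteadyProfile Y ε α (v ε))
    (hα : α ∈ Ioo 0 1) (hYc : ContinuousOn Y (Ioo 0 1)) (hYpos : ∀ u ∈ Ioo 0 1, 0 < Y u)
    (hYle₀ : ∀ u ∈ Ioo 0 1, Y u ≤ k * u ^ 2 / 2)
    (hYle₁ : ∀ u ∈ Ioo 0 1, Y u ≤ k * (1 - u) ^ 2 / 2) (z : ℝ) :
    Tendsto (fun ε => v ε z) (𝓝[>] 0) (𝓝 (min (max (z + α) 0) 1)) := by
  rcases le_total 0 z with hz | hz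
  · rw [max_eq_left (by linarith [hα.1])]
    exact tendsto_isSteadyProfile_of_nonneg hv hα hYc hYpos hYle₁ hz
  have hIoo : MapsTo (fun u : ℝ => 1 - u) (Ioo 0 1) (Ioo 0 1) :=
    fun u hu => ⟨by linarith [hu.2], by linarith [hu.1]⟩
  have := tendsto_isSteadyProfile_of_nonneg (Y := fun u => Y (1 - u))
    (v := fun ε t => 1 - v ε (-t))
    (fun ε hε => (hv ε hε).reflect) ⟨by linarith [hα.2], by linarith [hα.1]⟩
    (hYc.comp (by fun_prop) hIoo) (fun u hu => hYpos _ (hIoo hu))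
    (fun u hu => by simpa using hYle₀ _ (hIoo hu)) (neg_nonneg.2 hz)
  have hlim : min (max (z + α) 0) 1 = 1 - min (-z + (1 - α)) 1 := by
    rw [min_eq_left (max_le (by linarith [hα.2]) zero_le_one), ← max_sub_sub_left, sub_self]
    ring_nf
  rw [hlim]
  simpa using this.const_sub 1

end tendsto

section Ffn

variable {f : ℝ → ℝ}

theorem Ffn_hasDerivWithinAt (hf : ContinuousOn f (Icc 0 1)) {v : ℝ} (hv : v ∈ Icc 0 1) :
    HasDerivWithinAt (Ffn f) (f v) (Icc 0 1) v := by
  set g := IccExtend zero_le_one ((Icc 0 1).domRestrict f)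
  have hgf : EqOn g f (Icc 0 1) := fun s hs => IccExtend_of_mem zero_le_one _ hs
  have hg : HasDerivAt (fun u => ∫ s in (0 : ℝ)..u, g s) (g v) v :=
    (hf.domRestrict.Icc_extend'.integral_hasStrictDerivAt 0 v).hasDerivAt
  rw [hgf hv] at hg
  refine hg.hasDerivWithinAt.congr (fun w hw => ?_) ?_ <;>
    refine intervalIntegral.integral_congr fun s hs => (hgf ?_).symm
  · rw [uIcc_of_le hw.1] at hs; exact ⟨hs.1, hs.2.trans hw.2⟩
  · rw [uIcc_of_le hv.1] at hs; exact ⟨hs.1, hs.2.trans hv.2⟩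

lemma Ffn_zero : Ffn f 0 = 0 := intervalIntegral.integral_same

lemma neg_Ffn_hasDerivWithinAt (hf : ContinuousOn f (Icc 0 1)) {s : Set ℝ} (hs : s ⊆ Icc 0 1)
    {v : ℝ} (hv : v ∈ s) :
    HasDerivWithinAt (fun w => -Ffn f w) (-f v) s v :=
  ((Ffn_hasDerivWithinAt hf (hs hv)).mono hs).neg

lemma neg_Ffn_pos (hf : ContinuousOn f (Icc 0 1)) {α : ℝ} (hα : α ∈ Ioo 0 1)
    (hneg : ∀ s ∈ Ioo 0 α, f s < 0) (hpos : ∀ s ∈ Ioo α 1, 0 < f s) (hbal : Ffn f 1 = 0)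
    {v : ℝ} (hv : v ∈ Ioo 0 1) :
    0 < -Ffn f v := by
  rcases le_or_gt v α with hvα | hvα
  · have hsub : Icc 0 α ⊆ Icc 0 1 := Icc_subset_Icc_right hα.2.le
    have := strictMonoOn_of_hasDerivWithinAt_pos (convex_Icc 0 α)
      (fun w hw => (neg_Ffn_hasDerivWithinAt hf hsub hw).continuousWithinAt)
      (fun w hw => neg_Ffn_hasDerivWithinAt hf (interior_subset.trans hsub) hw)
      (fun w hw => neg_pos.2 (hneg w (by rwa [interior_Icc] at hw)))
      ⟨le_rfl, hα.1.le⟩ ⟨hv.1.le, hvα⟩ hv.1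
    simpa [Ffn_zero] using this
  · have hsub : Icc α 1 ⊆ Icc 0 1 := Icc_subset_Icc_left hα.1.le
    have := strictAntiOn_of_hasDerivWithinAt_neg (convex_Icc α 1)
      (fun w hw => (neg_Ffn_hasDerivWithinAt hf hsub hw).continuousWithinAt)
      (fun w hw => neg_Ffn_hasDerivWithinAt hf (interior_subset.trans hsub) hw)
      (fun w hw => neg_neg_iff_pos.2 (hpos w (by rwa [interior_Icc] at hw)))
      ⟨hvα.le, hv.2.le⟩ ⟨hα.2.le, le_rfl⟩ hv.2
    simpa [hbal] using this

lemma neg_Ffn_le_sq (hf : ContinuousOn f (Icc 0 1)) {k : ℝ}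
    (hk : ∀ s ∈ Icc (0 : ℝ) 1, |f s| ≤ k * s) {v : ℝ} (hv : v ∈ Icc 0 1) :
    -Ffn f v ≤ k * v ^ 2 / 2 := by
  have hd (w : ℝ) (hw : w ∈ Icc 0 1) : HasDerivWithinAt (fun w => -Ffn f w - k * w ^ 2 / 2)
      (-f w - k * w) (Icc 0 1) w :=
    (neg_Ffn_hasDerivWithinAt hf subset_rfl hw).sub <|
      (((hasDerivAt_pow 2 w).const_mul k).div_const 2).congr_deriv (by push_cast; ring)
        |>.hasDerivWithinAt
  have := antitoneOn_of_hasDerivWithinAt_nonpos (convex_Icc 0 1)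
    (fun w hw => (hd w hw).continuousWithinAt)
    (fun w hw => (hd w (interior_subset hw)).mono interior_subset)
    (fun w hw => by linarith [neg_le_abs (f w), hk w (interior_subset hw)])
    ⟨le_rfl, zero_le_one⟩ hv hv.1
  simpa [Ffn_zero] using this

lemma neg_Ffn_le_one_sub_sq (hf : ContinuousOn f (Icc 0 1)) (hbal : Ffn f 1 = 0) {k : ℝ}
    (hk : ∀ s ∈ Icc (0 : ℝ) 1, |f s| ≤ k * (1 - s)) {v : ℝ} (hv : v ∈ Icc 0 1) :
    -Ffn f v ≤ k * (1 - v) ^ 2 / 2 := by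
  have hd (w : ℝ) (hw : w ∈ Icc 0 1) :
      HasDerivWithinAt (fun w => -Ffn f w - k * (1 - w) ^ 2 / 2) (-f w - -(k * (1 - w)))
        (Icc 0 1) w := by
    have hq : HasDerivAt (fun w => k * (1 - w) ^ 2 / 2) (-(k * (1 - w))) w :=
      ((((hasDerivAt_id' w).const_sub 1).pow 2).const_mul k |>.div_const 2).congr_deriv
        (by push_cast; ring)
    exact (neg_Ffn_hasDerivWithinAt hf subset_rfl hw).sub hq.hasDerivWithinAt
  have := monotoneOn_of_hasDerivWithinAt_nonneg (convex_Icc 0 1)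
    (fun w hw => (hd w hw).continuousWithinAt)
    (fun w hw => (hd w (interior_subset hw)).mono interior_subset)
    (fun w hw => by linarith [le_abs_self (f w), hk w (interior_subset hw)])
    hv ⟨zero_le_one, le_rfl⟩ hv.2
  simpa [hbal] using this

end Ffn

lemma Rab_pos {a b y : ℝ} (ha : 0 < a) (hy : 0 < y) : 0 < Rab a b y := by
  unfold Rab; positivity

section Admissible

variable {f : ℝ → ℝ} {a b c : ℝ}

theorem Admissible.eq_zero (h : Admissible f a b c) (hf : ContinuousOn f (Icc 0 1))
    (hbal : Ffn f 1 = 0) (ha : 0 < a) : c = 0 := by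
  obtain ⟨y, hy0, hy1, hypos, hy'⟩ := h
  have hg (v : ℝ) (hv : v ∈ Icc 0 1) :
      HasDerivWithinAt (y + Ffn f) (c * a * Rab a b (y v)) (Icc 0 1) v := by
    simpa using (hy' v hv).add (Ffn_hasDerivWithinAt hf hv)
  obtain ⟨ξ, hξ, hξ0⟩ := exists_hasDerivAt_eq_zero zero_lt_one
    (fun v hv => (hg v hv).continuousWithinAt) (by simp [hy0, hy1, hbal, Ffn_zero])
    (fun v hv => (hg v (Ioo_subset_Icc_self hv)).hasDerivAt (Icc_mem_nhds hv.1 hv.2))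
  simpa [ha.ne', (Rab_pos ha (hypos ξ hξ)).ne'] using hξ0

theorem admissible_zero (hf : ContinuousOn f (Icc 0 1)) (hbal : Ffn f 1 = 0)
    (hpos : ∀ v ∈ Ioo 0 1, 0 < -Ffn f v) : Admissible f a b 0 :=
  ⟨fun v => -Ffn f v, by simp [Ffn_zero], by simp [hbal], hpos,
    fun v hv => by simpa using neg_Ffn_hasDerivWithinAt hf subset_rfl hv⟩

end Admissible

/-- balanced type C reactions. For `a = b = 1/ε`, `c = 0` is the unique
admissible speed, the first-order reduction is solved by `y = −F`, and the steady
profiles converge pointwise to the piecewise linear profile `z ↦ min(max(z+α,0),1)`. -/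
theorem statement15 (f : ℝ → ℝ) (α : ℝ) (hH : HypH f)
    (hC : TypeC f α) (hbal : Ffn f 1 = 0)
    (vfun : ℝ → ℝ → ℝ)
    (hv : ∀ ε : ℝ, 0 < ε → StrictMono (vfun ε) ∧ vfun ε 0 = α ∧
      ∀ z, HasDerivAt (vfun ε)
        (Real.sqrt ((-Ffn f (vfun ε z)) * (2 * ε + -Ffn f (vfun ε z)))
          / (ε + -Ffn f (vfun ε z))) z) :
    (∀ ε : ℝ, 0 < ε → ∀ c : ℝ, Admissible f (1/ε) (1/ε) c ↔ c = 0) ∧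
    ((-Ffn f 0 = 0) ∧ (-Ffn f 1 = 0) ∧ (∀ v ∈ Set.Ioo (0:ℝ) 1, 0 < -Ffn f v) ∧
      ∀ v ∈ Set.Icc (0:ℝ) 1,
        HasDerivWithinAt (fun w => -Ffn f w) (-f v) (Set.Icc 0 1) v) ∧
    (∀ z : ℝ, Filter.Tendsto (fun ε => vfun ε z) (nhdsWithin 0 (Set.Ioi 0))
      (nhds (min (max (z + α) 0) 1))) := by
  obtain ⟨hf, -, -, k, -, hk⟩ := hH
  obtain ⟨hα, hneg, hpos, -⟩ := hC
  have hFpos : ∀ v ∈ Ioo (0 : ℝ) 1, 0 < -Ffn f v := fun v => neg_Ffn_pos hf hα hneg hpos hbal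
  refine ⟨fun ε hε c => ⟨fun h => h.eq_zero hf hbal (by positivity),
      by rintro rfl; exact admissible_zero hf hbal hFpos⟩,
    ⟨by simp [Ffn_zero], by simp [hbal], hFpos,
      fun v => neg_Ffn_hasDerivWithinAt hf subset_rfl⟩,
    tendsto_isSteadyProfile (Y := fun u => -Ffn f u) (k := k) hv hα
      (fun u hu => (neg_Ffn_hasDerivWithinAt hf Ioo_subset_Icc_self hu).continuousWithinAt) hFpos
      (fun u hu => neg_Ffn_le_sq hf (fun s hs => (hk s hs).1) (Ioo_subset_Icc_self hu))
      (fun u hu =>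
        neg_Ffn_le_one_sub_sq hf hbal (fun s hs => (hk s hs).2) (Ioo_subset_Icc_self hu))⟩
end
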